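/- For every real δ > √e, every real ε > 0, and every positive integer k, writing K_j = K_j(πεk), the normal Stokes slender-body PDE eigenvalue λⁿ = 2π²εk·(4K₁²K₂ + πεk·K₁·(K₁² − K₀K₂)) / (2K₀K₁K₂ + πεk·(K₁²(K₀ + K₂) − 2K₀²K₂)) and the δ-regularized normal eigenvalue λ^{δ,n} = 8π/(1 + 2·log δ + 2·K₀(δπεk)) satisfy |λⁿ − λ^{δ,n}| ≤ 3π·(1 + 8/(3·(1 + 2·log δ)) + πεk). -/

import Mathlib

/-!
Write `z = πεk`, `Kⱼ = Kⱼ(z)` and `Mₙ = ∫₀^∞ e^{-z cosh t} coshⁿ t dt`. Since `cosh 2t = 2cosh²t - 1`,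
`K₀ = M₀`, `K₁ = M₁`, `K₂ = 2M₂ - M₀`, and integrating `(e^{-z cosh t} sinh t coshⁿ t)'` gives
`z (Mₙ₊₂ - Mₙ) = (n + 1) Mₙ₊₁ - n Mₙ₋₁`; for `n = 0` this is `z K₂ = z K₀ + 2 K₁`.
Positivity of the weight against `(x - y)²` and `(x - 1)³` on `x = cosh t ≥ 1` gives `M₁² ≤ M₀ M₂`
and `M₀ + 3M₂ ≤ 3M₁ + M₃`, that is, an upper bound `z (K₁² - K₀²) ≤ K₀ K₁` and a lower bound
`3 z K₁ ≤ 4 z² (K₁ - K₀) + z K₀ + 2 K₁` on `K₁ - K₀`. Both are sharp to leading order as `z → ∞`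
(where `K₁/K₀ ≈ 1 + 1/(2z)`), and together, after eliminating `K₂`, an explicit polynomial
certificate gives `0 ≤ λⁿ ≤ 3π (1 + z)`. Trivially `0 ≤ λ^{δ,n} ≤ 8π / (1 + 2 log δ)`, and
`|x - y| ≤ A + B` for `x ∈ [0, A]`, `y ∈ [0, B]`.
-/

open Real

/-- Modified Bessel function of the second kind of order `j`:
`K_j(z) = ∫₀^∞ exp (−z cosh t) * cosh (j t) dt`. -/
noncomputable def besselK (j : ℕ) (z : ℝ) : ℝ :=
  ∫ t in Set.Ioi (0 : ℝ), Real.exp (-z * Real.cosh t) * Real.cosh ((j : ℝ) * t)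

open MeasureTheory Set Filter Topology Asymptotics

namespace Real

theorem exp_div_two_le_cosh (t : ℝ) : exp t / 2 ≤ cosh t := by
  rw [cosh_eq]
  linarith [exp_pos (-t)]

theorem abs_sinh_le_cosh (x : ℝ) : |sinh x| ≤ cosh x := by
  rw [abs_sinh, ← cosh_abs]
  exact (sinh_lt_cosh _).le

theorem tendsto_cosh_atTop : Tendsto cosh atTop atTop :=
  tendsto_atTop_mono exp_div_two_le_cosh (tendsto_exp_atTop.atTop_div_const two_pos)

theorem hasDerivAt_sinh_mul_cosh_pow (n : ℕ) (x : ℝ) :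
    HasDerivAt (fun t => sinh t * cosh t ^ n)
      ((n + 1) * cosh x ^ (n + 1) - n * cosh x ^ (n - 1)) x := by
  refine ((hasDerivAt_sinh x).fun_mul ((hasDerivAt_cosh x).fun_pow n)).congr_deriv ?_
  rcases n with _ | n
  · simp
  · simp only [Nat.cast_succ, Nat.add_sub_cancel]
    linear_combination ((n : ℝ) + 1) * cosh x ^ n * sinh_sq x

end Real

noncomputable def coshMoment (z : ℝ) (n : ℕ) : ℝ :=
  ∫ t in Ioi 0, exp (-z * cosh t) * cosh t ^ n

section CoshMoment

variable {z : ℝ}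

theorem tendsto_cosh_pow_mul_exp_neg_mul_cosh (hz : 0 < z) (n : ℕ) :
    Tendsto (fun t => cosh t ^ n * exp (-z * cosh t)) atTop (𝓝 0) := by
  refine ((isLittleO_pow_exp_pos_mul_atTop n hz).tendsto_div_nhds_zero.comp
    tendsto_cosh_atTop).congr fun t => ?_
  simp [div_eq_mul_inv, ← exp_neg]

theorem integrableOn_exp_neg_mul_cosh_mul_cosh_pow (hz : 0 < z) (n : ℕ) :
    IntegrableOn (fun t => exp (-z * cosh t) * cosh t ^ n) (Ioi 0) := by
  refine integrable_of_isBigO_exp_neg one_pos (by fun_prop) ?_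
  have hinv : (fun t => (cosh t)⁻¹) =O[atTop] fun t => exp (-1 * t) := by
    refine IsBigO.of_bound 2 (Eventually.of_forall fun t => ?_)
    rw [norm_inv, norm_of_nonneg (cosh_pos t).le, norm_of_nonneg (exp_pos _).le, neg_one_mul,
      exp_neg, ← div_eq_mul_inv, inv_le_iff_one_le_mul₀ (cosh_pos t), div_mul_eq_mul_div,
      le_div_iff₀ (exp_pos t)]
    linarith [exp_div_two_le_cosh t]
  refine (((tendsto_cosh_pow_mul_exp_neg_mul_cosh hz (n + 1)).isBigO_one ℝ).mul hinv).congr'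
    (Eventually.of_forall fun t => ?_) (Eventually.of_forall fun t => one_mul _)
  field_simp [(cosh_pos t).ne']
  ring

theorem coshMoment_pos (hz : 0 < z) (n : ℕ) : 0 < coshMoment z n := by
  have hpos : ∀ t, 0 < exp (-z * cosh t) * cosh t ^ n := fun t => by positivity
  rw [coshMoment, setIntegral_pos_iff_support_of_nonneg_ae
    (Eventually.of_forall fun t => (hpos t).le) (integrableOn_exp_neg_mul_cosh_mul_cosh_pow hz n),
    Function.support_eq_univ fun t => (hpos t).ne', univ_inter]
  simp

section Sums

variable {ι : Type*} (s : Finset ι) (c : ι → ℝ) (e : ι → ℕ)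

theorem integrableOn_exp_neg_mul_cosh_mul_sum (hz : 0 < z) :
    IntegrableOn (fun t => exp (-z * cosh t) * ∑ i ∈ s, c i * cosh t ^ e i) (Ioi 0) := by
  simp_rw [Finset.mul_sum, mul_left_comm (exp _)]
  exact integrable_finsetSum s fun i _ =>
    (integrableOn_exp_neg_mul_cosh_mul_cosh_pow hz (e i)).const_mul (c i)

theorem integral_exp_neg_mul_cosh_mul_sum (hz : 0 < z) :
    ∫ t in Ioi 0, exp (-z * cosh t) * ∑ i ∈ s, c i * cosh t ^ e i =
      ∑ i ∈ s, c i * coshMoment z (e i) := by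
  simp_rw [Finset.mul_sum, mul_left_comm (exp _)]
  rw [integral_finsetSum s fun i _ =>
    (integrableOn_exp_neg_mul_cosh_mul_cosh_pow hz (e i)).const_mul (c i)]
  simp_rw [integral_const_mul, coshMoment]

theorem sum_mul_coshMoment_nonneg (hz : 0 < z) (h : ∀ x, 1 ≤ x → 0 ≤ ∑ i ∈ s, c i * x ^ e i) :
    0 ≤ ∑ i ∈ s, c i * coshMoment z (e i) := by
  rw [← integral_exp_neg_mul_cosh_mul_sum s c e hz]
  exact setIntegral_nonneg measurableSet_Ioi fun t _ =>
    mul_nonneg (exp_pos _).le (h _ (one_le_cosh t))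

end Sums

/-- At `n = 0` the truncated index `n - 1` is harmless: its coefficient vanishes. -/
theorem coshMoment_recurrence (hz : 0 < z) (n : ℕ) :
    z * (coshMoment z (n + 2) - coshMoment z n) =
      (n + 1) * coshMoment z (n + 1) - n * coshMoment z (n - 1) := by
  let c : Fin 4 → ℝ := ![z, -z, -(n + 1), n]
  let e : Fin 4 → ℕ := ![n + 2, n, n + 1, n - 1]
  have hF : ∫ t in Ioi 0, exp (-z * cosh t) * ∑ i, c i * cosh t ^ e i = 0 := by
    have := integral_Ioi_of_hasDerivAt_of_tendsto
      (f := fun t => -(exp (-z * cosh t) * (sinh t * cosh t ^ n)))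
      (f' := fun t => exp (-z * cosh t) * ∑ i, c i * cosh t ^ e i) (m := 0)
      (by fun_prop) (fun x _ => ?_) (integrableOn_exp_neg_mul_cosh_mul_sum _ c e hz) ?_
    · simpa using this
    · refine (((hasDerivAt_cosh x).const_mul (-z)).exp.fun_mul
        (hasDerivAt_sinh_mul_cosh_pow n x)).neg.congr_deriv ?_
      simp only [Fin.sum_univ_succ, Fin.sum_univ_zero, Matrix.cons_val_zero,
        Matrix.cons_val_succ, c, e]
      linear_combination exp (-z * cosh x) * z * cosh x ^ n * sinh_sq x
    · refine squeeze_zero_norm (fun t => ?_) (tendsto_cosh_pow_mul_exp_neg_mul_cosh hz (n + 1))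
      rw [norm_neg, norm_mul, norm_mul, norm_of_nonneg (exp_pos _).le,
        norm_of_nonneg (pow_pos (cosh_pos t) n).le, Real.norm_eq_abs, pow_succ']
      calc _ ≤ exp (-z * cosh t) * (cosh t * cosh t ^ n) := by gcongr; exact abs_sinh_le_cosh t
        _ = _ := by ring
  rw [integral_exp_neg_mul_cosh_mul_sum _ _ _ hz] at hF
  simp only [Fin.sum_univ_succ, Fin.sum_univ_zero, Matrix.cons_val_zero,
    Matrix.cons_val_succ, c, e] at hF
  linarith

theorem coshMoment_zero_le_one (hz : 0 < z) : coshMoment z 0 ≤ coshMoment z 1 := by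
  have h := sum_mul_coshMoment_nonneg Finset.univ ![-1, 1] ![0, 1] hz fun x hx => by
    simp only [Fin.sum_univ_succ, Fin.sum_univ_zero, Matrix.cons_val_zero, Matrix.cons_val_succ]
    linarith
  simp only [Fin.sum_univ_succ, Fin.sum_univ_zero, Matrix.cons_val_zero,
    Matrix.cons_val_succ] at h
  linarith

theorem coshMoment_one_sq_le (hz : 0 < z) :
    coshMoment z 1 ^ 2 ≤ coshMoment z 0 * coshMoment z 2 := by
  have hquad (y : ℝ) :
      0 ≤ coshMoment z 0 * (y * y) + -2 * coshMoment z 1 * y + coshMoment z 2 := by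
    have h := sum_mul_coshMoment_nonneg Finset.univ ![y * y, -2 * y, 1] ![0, 1, 2] hz
      fun x _ => by
        simp only [Fin.sum_univ_succ, Fin.sum_univ_zero, Matrix.cons_val_zero,
          Matrix.cons_val_succ]
        nlinarith [sq_nonneg (y - x)]
    simp only [Fin.sum_univ_succ, Fin.sum_univ_zero, Matrix.cons_val_zero,
      Matrix.cons_val_succ] at h
    linear_combination h
  have h := discrim_le_zero hquad
  rw [discrim] at h
  linarith

theorem coshMoment_zero_add_three_mul_two_le (hz : 0 < z) :
    coshMoment z 0 + 3 * coshMoment z 2 ≤ 3 * coshMoment z 1 + coshMoment z 3 := by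
  have h := sum_mul_coshMoment_nonneg Finset.univ ![-1, 3, -3, 1] ![0, 1, 2, 3] hz fun x hx => by
    simp only [Fin.sum_univ_succ, Fin.sum_univ_zero, Matrix.cons_val_zero, Matrix.cons_val_succ]
    nlinarith [pow_nonneg (sub_nonneg.2 hx) 3]
  simp only [Fin.sum_univ_succ, Fin.sum_univ_zero, Matrix.cons_val_zero,
    Matrix.cons_val_succ] at h
  linarith

end CoshMoment

section BesselK

variable {z : ℝ}

theorem besselK_nonneg (j : ℕ) (z : ℝ) : 0 ≤ besselK j z :=
  setIntegral_nonneg measurableSet_Ioi fun t _ => by positivity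

theorem besselK_zero_eq_coshMoment (z : ℝ) : besselK 0 z = coshMoment z 0 := by
  simp [besselK, coshMoment]

theorem besselK_one_eq_coshMoment (z : ℝ) : besselK 1 z = coshMoment z 1 := by
  simp [besselK, coshMoment]

theorem besselK_two_eq_coshMoment (hz : 0 < z) :
    besselK 2 z = 2 * coshMoment z 2 - coshMoment z 0 := by
  have h := integral_exp_neg_mul_cosh_mul_sum Finset.univ ![-1, 2] ![0, 2] hz
  simp only [Fin.sum_univ_two, Matrix.cons_val_zero, Matrix.cons_val_one] at h
  calc besselK 2 z = ∫ t in Ioi 0, exp (-z * cosh t) * (-1 * cosh t ^ 0 + 2 * cosh t ^ 2) := by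
        rw [besselK]
        congr 1
        funext t
        push_cast
        rw [cosh_two_mul, cosh_sq]
        ring
    _ = 2 * coshMoment z 2 - coshMoment z 0 := by rw [h]; ring

theorem besselK_zero_pos (hz : 0 < z) : 0 < besselK 0 z :=
  besselK_zero_eq_coshMoment z ▸ coshMoment_pos hz 0

theorem besselK_zero_le_besselK_one (hz : 0 < z) : besselK 0 z ≤ besselK 1 z := by
  rw [besselK_zero_eq_coshMoment, besselK_one_eq_coshMoment]
  exact coshMoment_zero_le_one hz

theorem mul_besselK_two (hz : 0 < z) :
    z * besselK 2 z = z * besselK 0 z + 2 * besselK 1 z := by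
  have h := coshMoment_recurrence hz 0
  norm_num at h
  rw [besselK_two_eq_coshMoment hz, besselK_zero_eq_coshMoment, besselK_one_eq_coshMoment]
  linear_combination 2 * h

theorem mul_sq_besselK_one_sub_sq_le (hz : 0 < z) :
    z * (besselK 1 z ^ 2 - besselK 0 z ^ 2) ≤ besselK 0 z * besselK 1 z := by
  have h := coshMoment_recurrence hz 0
  norm_num at h
  rw [besselK_zero_eq_coshMoment, besselK_one_eq_coshMoment]
  linear_combination z * coshMoment_one_sq_le hz + coshMoment z 0 * h

theorem three_mul_mul_besselK_one_le (hz : 0 < z) :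
    3 * z * besselK 1 z ≤
      4 * z ^ 2 * (besselK 1 z - besselK 0 z) + z * besselK 0 z + 2 * besselK 1 z := by
  have h₀ := coshMoment_recurrence hz 0
  have h₁ := coshMoment_recurrence hz 1
  norm_num at h₀ h₁
  rw [besselK_zero_eq_coshMoment, besselK_one_eq_coshMoment]
  linear_combination z ^ 2 * coshMoment_zero_add_three_mul_two_le hz + z * h₁ + (2 - 3 * z) * h₀

end BesselK

section NormalRatio

variable {z a b c : ℝ}

theorem normal_ratio_cleared_le (hz : 0 < z) (ha : 0 < a) (hab : a ≤ b)
    (hupper : z * (b ^ 2 - a ^ 2) ≤ a * b)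
    (hlower : 3 * z * b ≤ 4 * z ^ 2 * (b - a) + z * a + 2 * b) :
    2 * z * (2 * z * a * b ^ 2 + 8 * b ^ 3 + z ^ 2 * b * (b ^ 2 - a ^ 2)) ≤
      3 * (1 + z) *
        (4 * a * b ^ 2 + 2 * z * b * (b ^ 2 - a ^ 2) + 2 * z ^ 2 * a * (b ^ 2 - a ^ 2)) := by
  obtain ⟨d, hd, rfl⟩ : ∃ d, 0 ≤ d ∧ b = a + d := ⟨b - a, sub_nonneg.2 hab, by ring⟩
  have hupper' := mul_nonneg (by positivity : 0 ≤ a / 2 + (10 + 2 * z ^ 2) * d)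
    (sub_nonneg.2 hupper)
  have hlower' := mul_nonneg (by positivity : 0 ≤ (2 * z + 5) * a ^ 2) (sub_nonneg.2 hlower)
  have hrest : 0 ≤ 3 / 2 * a ^ 3 + 7 / 2 * a ^ 2 * d + 2 * a * d ^ 2 + 2 * z * a ^ 3
      + 5 / 2 * z * a * d ^ 2 + 18 * z ^ 2 * a * d ^ 2 + 6 * z ^ 2 * d ^ 3
      + 4 * z ^ 3 * a * d ^ 2 := by
    positivity
  linear_combination hupper' + hlower' + hrest

theorem normal_ratio_bounds (hz : 0 < z) (ha : 0 < a) (hab : a ≤ b)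
    (hc : z * c = z * a + 2 * b) (hupper : z * (b ^ 2 - a ^ 2) ≤ a * b)
    (hlower : 3 * z * b ≤ 4 * z ^ 2 * (b - a) + z * a + 2 * b) :
    0 ≤ (4 * b ^ 2 * c + z * b * (b ^ 2 - a * c)) /
        (2 * a * b * c + z * (b ^ 2 * (a + c) - 2 * a ^ 2 * c)) ∧
      2 * z * ((4 * b ^ 2 * c + z * b * (b ^ 2 - a * c)) /
        (2 * a * b * c + z * (b ^ 2 * (a + c) - 2 * a ^ 2 * c))) ≤ 3 * (1 + z) := by
  have hb : 0 < b := ha.trans_le hab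
  have hsq : 0 ≤ b ^ 2 - a ^ 2 := by nlinarith
  have hratio : (4 * b ^ 2 * c + z * b * (b ^ 2 - a * c)) /
      (2 * a * b * c + z * (b ^ 2 * (a + c) - 2 * a ^ 2 * c)) =
      (2 * z * a * b ^ 2 + 8 * b ^ 3 + z ^ 2 * b * (b ^ 2 - a ^ 2)) /
      (4 * a * b ^ 2 + 2 * z * b * (b ^ 2 - a ^ 2) + 2 * z ^ 2 * a * (b ^ 2 - a ^ 2)) := by
    rw [← mul_div_mul_left _ _ hz.ne']
    congr 1
    · linear_combination (4 * b ^ 2 - z * a * b) * hc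
    · linear_combination (2 * a * b + z * b ^ 2 - 2 * z * a ^ 2) * hc
  have hN : 0 ≤ 2 * z * a * b ^ 2 + 8 * b ^ 3 + z ^ 2 * b * (b ^ 2 - a ^ 2) :=
    add_nonneg (by positivity) (mul_nonneg (by positivity) hsq)
  have hD : 0 < 4 * a * b ^ 2 + 2 * z * b * (b ^ 2 - a ^ 2) + 2 * z ^ 2 * a * (b ^ 2 - a ^ 2) :=
    add_pos_of_pos_of_nonneg (add_pos_of_pos_of_nonneg (by positivity)
      (mul_nonneg (by positivity) hsq)) (mul_nonneg (by positivity) hsq)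
  rw [hratio, mul_div_assoc', div_le_iff₀ hD]
  exact ⟨div_nonneg hN hD.le, normal_ratio_cleared_le hz ha hab hupper hlower⟩

end NormalRatio

theorem delta_reg_stokes_normal_eigenvalue_difference (δ : ℝ)
    (hδ : Real.sqrt (Real.exp 1) < δ) (ε : ℝ) (hε : 0 < ε) (k : ℕ) (hk : 1 ≤ k) :
    |2 * π ^ 2 * ε * (k : ℝ) *
          ((4 * (besselK 1 (π * ε * (k : ℝ))) ^ 2 * besselK 2 (π * ε * (k : ℝ)) +
              π * ε * (k : ℝ) * besselK 1 (π * ε * (k : ℝ)) *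
                ((besselK 1 (π * ε * (k : ℝ))) ^ 2 -
                  besselK 0 (π * ε * (k : ℝ)) * besselK 2 (π * ε * (k : ℝ)))) /
            (2 * besselK 0 (π * ε * (k : ℝ)) * besselK 1 (π * ε * (k : ℝ)) *
                besselK 2 (π * ε * (k : ℝ)) +
              π * ε * (k : ℝ) *
                ((besselK 1 (π * ε * (k : ℝ))) ^ 2 *
                    (besselK 0 (π * ε * (k : ℝ)) + besselK 2 (π * ε * (k : ℝ))) -
                  2 * (besselK 0 (π * ε * (k : ℝ))) ^ 2 *
                    besselK 2 (π * ε * (k : ℝ))))) -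
        8 * π / (1 + 2 * Real.log δ + 2 * besselK 0 (δ * π * ε * (k : ℝ)))| ≤
      3 * π * (1 + 8 / (3 * (1 + 2 * Real.log δ)) + π * ε * (k : ℝ)) := by
  set z := π * ε * (k : ℝ)
  have hz : 0 < z := by
    have : (0 : ℝ) < k := by exact_mod_cast hk
    positivity
  obtain ⟨hratio_nonneg, hratio_le⟩ := normal_ratio_bounds hz (besselK_zero_pos hz)
    (besselK_zero_le_besselK_one hz) (mul_besselK_two hz) (mul_sq_besselK_one_sub_sq_le hz)
    (three_mul_mul_besselK_one_le hz)
  have hlog : 0 < 1 + 2 * log δ := by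
    rw [← exp_half] at hδ
    linarith [(lt_log_iff_exp_lt ((exp_pos _).trans hδ)).2 hδ]
  have hK := besselK_nonneg 0 (δ * π * ε * k)
  rw [show 3 * π * (1 + 8 / (3 * (1 + 2 * log δ)) + z) =
      π * (3 * (1 + z)) + 8 * π / (1 + 2 * log δ) by field_simp; ring,
    show 2 * π ^ 2 * ε * k = π * (2 * z) by ring]
  refine abs_sub_le_of_nonneg_of_le (mul_nonneg (by positivity) hratio_nonneg) ?_
    (by positivity) ?_
  · rw [mul_assoc]
    exact le_add_of_le_of_nonneg (mul_le_mul_of_nonneg_left hratio_le pi_pos.le) (by positivity)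
  · exact le_add_of_nonneg_of_le (by positivity)
      (div_le_div_of_nonneg_left (by positivity) hlog (by linarith))
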